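/- arXiv:1909.04426 — 4 statements merged into one kernel-verified Lean document; each statement's English description precedes it below -/
import Mathlib

section
/- If P : V → V is a linear projection (P² = P) on a complex inner product space and S is a Hermitian positive definite operator on V, then every eigenvalue of the operator S⁻¹ Pᴴ S P is a nonnegative real number. -/
/-!
If `S⁻¹ Pᴴ S P v = μ v` with `v ≠ 0`, then `Pᴴ S P v = μ S v`; pairing with `v` gives
`⟪S P v, P v⟫ = conj μ ⟪S v, v⟫`. Both forms are real, the left one nonnegative and the right
one positive, so `μ` is their (real, nonnegative) quotient.
-/

section

open RCLike LinearMap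
open scoped ComplexOrder InnerProductSpace ComplexConjugate

variable {𝕜 E : Type*} [RCLike 𝕜] [NormedAddCommGroup E] [InnerProductSpace 𝕜 E]

theorem LinearMap.IsSymmetric.nonneg_of_adjoint_apply_eq_smul [FiniteDimensional 𝕜 E]
    {S A : E →ₗ[𝕜] E} (hS : S.IsSymmetric) (hS_pos : ∀ v : E, v ≠ 0 → 0 < re ⟪S v, v⟫_𝕜)
    {μ : 𝕜} {v : E} (hv : v ≠ 0) (h : adjoint A (S (A v)) = μ • S v) : 0 ≤ μ := by
  have hre_nonneg : 0 ≤ re ⟪S (A v), A v⟫_𝕜 := by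
    by_cases hAv : A v = 0
    · simp [hAv]
    · exact (hS_pos _ hAv).le
  have hpair : ⟪S (A v), A v⟫_𝕜 = conj μ * ⟪S v, v⟫_𝕜 := by
    rw [← adjoint_inner_left, h, inner_smul_left]
  have hconj : conj μ = ((re ⟪S (A v), A v⟫_𝕜 / re ⟪S v, v⟫_𝕜 : ℝ) : 𝕜) := by
    rw [ofReal_div, hS.coe_re_inner_apply_self, hS.coe_re_inner_apply_self, hpair,
      mul_div_cancel_right₀]
    rw [← hS.coe_re_inner_apply_self, ofReal_ne_zero]
    exact (hS_pos v hv).ne'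
  rw [← star_nonneg_iff, ← starRingEnd_apply, hconj]
  exact ofReal_nonneg.mpr (div_nonneg hre_nonneg (hS_pos v hv).le)

end

theorem stmt0_general {V : Type*} [NormedAddCommGroup V] [InnerProductSpace ℂ V]
    [FiniteDimensional ℂ V]
    (S Sinv P : V →ₗ[ℂ] V)
    (hS_sym : S.IsSymmetric)
    (hS_pos : ∀ v : V, v ≠ 0 → 0 < (inner ℂ (S v) v : ℂ).re)
    (hSinv₂ : S ∘ₗ Sinv = LinearMap.id)
    (μ : ℂ)
    (hμ : Module.End.HasEigenvalue
      (Sinv ∘ₗ LinearMap.adjoint P ∘ₗ S ∘ₗ P) μ) :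
    μ.im = 0 ∧ 0 ≤ μ.re := by
  obtain ⟨v, hv⟩ := hμ.exists_hasEigenvector
  have h : LinearMap.adjoint P (S (P v)) = μ • S v := by
    have := congrArg S hv.apply_eq_smul
    simpa [← LinearMap.comp_apply S Sinv, hSinv₂] using this
  exact (RCLike.nonneg_iff.mp (hS_sym.nonneg_of_adjoint_apply_eq_smul hS_pos hv.2 h)).symm

/-- Every eigenvalue of S⁻¹ Pᴴ S P, with S Hermitian positive definite and P a
linear projection, is a nonnegative real number. -/
theorem stmt0 {V : Type*} [NormedAddCommGroup V] [InnerProductSpace ℂ V]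
    [FiniteDimensional ℂ V]
    (S Sinv P : V →ₗ[ℂ] V)
    (hS_sym : S.IsSymmetric)
    (hS_pos : ∀ v : V, v ≠ 0 → 0 < (inner ℂ (S v) v : ℂ).re)
    (hSinv₁ : Sinv ∘ₗ S = LinearMap.id) (hSinv₂ : S ∘ₗ Sinv = LinearMap.id)
    (hP : P ∘ₗ P = P)
    (μ : ℂ)
    (hμ : Module.End.HasEigenvalue
      (Sinv ∘ₗ LinearMap.adjoint P ∘ₗ S ∘ₗ P) μ) :
    μ.im = 0 ∧ 0 ≤ μ.re :=
  stmt0_general S Sinv P hS_sym hS_pos hSinv₂ μ hμ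
end

section
/- Let E : V → V be a linear operator on a finite-dimensional complex vector space with E² = E, and let S be a Hermitian positive definite operator. Let R : W → V be injective with E ∘ R = R, and let D : V → W satisfy D ∘ R = id_W. Then the operator G := (D ∘ S⁻¹ ∘ Dᴴ) ∘ (Rᴴ ∘ S ∘ R) on W has all eigenvalues of modulus ≥ 1. -/
/-- All eigenvalues of the BDDC preconditioned operator
G = (D S⁻¹ Dᴴ)(Rᴴ S R) have modulus at least 1. -/
theorem stmt1 {V W : Type*} [NormedAddCommGroup V] [InnerProductSpace ℂ V]
    [FiniteDimensional ℂ V]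
    [NormedAddCommGroup W] [InnerProductSpace ℂ W] [FiniteDimensional ℂ W]
    (S Sinv : V →ₗ[ℂ] V) (R : W →ₗ[ℂ] V) (D : V →ₗ[ℂ] W) (E : V →ₗ[ℂ] V)
    (hS_sym : S.IsSymmetric)
    (hS_pos : ∀ v : V, v ≠ 0 → 0 < (inner ℂ (S v) v : ℂ).re)
    (hSinv₁ : Sinv ∘ₗ S = LinearMap.id) (hSinv₂ : S ∘ₗ Sinv = LinearMap.id)
    (hE : E = R ∘ₗ D) (hEE : E ∘ₗ E = E)
    (hR : Function.Injective R)
    (hDR : D ∘ₗ R = LinearMap.id)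
    (hER : E ∘ₗ R = R)
    (μ : ℂ)
    (hμ : Module.End.HasEigenvalue
      ((D ∘ₗ Sinv ∘ₗ LinearMap.adjoint D) ∘ₗ (LinearMap.adjoint R ∘ₗ S ∘ₗ R)) μ) :
    1 ≤ ‖μ‖ := by
  classical
  obtain ⟨w, hw⟩ := hμ.exists_hasEigenvector
  have hw0 : w ≠ 0 := hw.right
  have hGw : ((D ∘ₗ Sinv ∘ₗ LinearMap.adjoint D) ∘ₗ (LinearMap.adjoint R ∘ₗ S ∘ₗ R)) w
      = μ • w := hw.apply_eq_smul
  set v : V := R w with hv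
  have hv0 : v ≠ 0 := fun h => hw0 (hR (by simpa [hv] using h))
  set p : V := LinearMap.adjoint D (LinearMap.adjoint R (S v)) with hp
  set u : V := Sinv p with hu
  have hSu : S u = p := by
    have := congrFun (congrArg DFunLike.coe hSinv₂) p
    simpa [hu] using this
  have hDu : D u = μ • w := by
    have : ((D ∘ₗ Sinv ∘ₗ LinearMap.adjoint D) ∘ₗ (LinearMap.adjoint R ∘ₗ S ∘ₗ R)) w
        = D u := by simp [hu, hp, hv, LinearMap.comp_apply]
    rw [← this, hGw]
  have hDv : D v = w := by
    have := congrFun (congrArg DFunLike.coe hDR) w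
    simpa [hv] using this
  set a : ℂ := inner ℂ (S v) v with ha
  -- a is real
  have ha_conj : (starRingEnd ℂ) a = a := by
    rw [ha]; exact (inner_conj_symm v (S v)).trans (hS_sym v v).symm
  have ha_im : a.im = 0 := Complex.conj_eq_iff_im.mp ha_conj
  have ha_re : 0 < a.re := hS_pos v hv0
  -- ⟨S u, v⟩ = a
  have h2 : (inner ℂ (S u) v : ℂ) = a := by
    rw [hSu, hp, LinearMap.adjoint_inner_left, LinearMap.adjoint_inner_left, hDv]
  -- ⟨S u, u⟩ = μ * a
  have h3 : (inner ℂ (S u) u : ℂ) = μ * a := by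
    rw [hSu, hp, LinearMap.adjoint_inner_left, LinearMap.adjoint_inner_left, hDu]
    simp [hv, inner_smul_right, ha]
  -- ⟨S v, u⟩ = a
  have h4 : (inner ℂ (S v) u : ℂ) = a := by
    rw [hS_sym v u, ← inner_conj_symm, h2, ha_conj]
  set c : ℂ := inner ℂ (S (v - u)) (v - u) with hc
  have hc_val : c = (μ - 1) * a := by
    rw [hc, map_sub, inner_sub_left, inner_sub_right, inner_sub_right, h2, h3, h4, ← ha]
    ring
  have hc_conj : (starRingEnd ℂ) c = c := by
    rw [hc]; exact (inner_conj_symm (v - u) (S (v - u))).trans (hS_sym (v - u) (v - u)).symm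
  have hc_im : c.im = 0 := Complex.conj_eq_iff_im.mp hc_conj
  have hc_re : 0 ≤ c.re := by
    by_cases h : v - u = 0
    · simp [hc, h]
    · exact le_of_lt (hS_pos _ h)
  -- extract real/imaginary parts of (μ - 1) * a = c
  have hμ_im : μ.im = 0 := by
    have h := congrArg Complex.im hc_val
    rw [hc_im] at h
    simp [Complex.mul_im, ha_im] at h
    rcases h with h | h
    · exact h
    · exact absurd h (ne_of_gt ha_re)
  have hre : (μ.re - 1) * a.re = c.re := by
    have h := congrArg Complex.re hc_val
    rw [h]
    simp [Complex.mul_re, Complex.sub_re, Complex.sub_im, ha_im]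
  have hμ_re : 1 ≤ μ.re := by
    nlinarith [hc_re, ha_re, hre]
  calc (1 : ℝ) ≤ μ.re := hμ_re
    _ ≤ |μ.re| := le_abs_self _
    _ ≤ ‖μ‖ := Complex.abs_re_le_norm μ
end

section
/- For Hermitian positive semidefinite matrices A and B of the same size such that A + B is positive definite, the parallel sum A : B := A (A+B)⁻¹ B is Hermitian positive semidefinite and satisfies A : B ≤ A and A : B ≤ B in the Loewner order. -/
/-!
With `S = (A + B)⁻¹`, the identities `(A + B) S = S (A + B) = 1` give
`A S B = A - A S A = B - B S B = B S A`. Hence `A - A : B = Aᴴ S A` and `B - A : B = Bᴴ S B`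
are congruences of the positive semidefinite `S`, and multiplying `A : B` by `S (A + B) = 1`
on the right splits it as `(S B)ᴴ A (S B) + (S A)ᴴ B (S A)`.
-/

open Matrix ComplexOrder

namespace Matrix

variable {n R : Type*} [Fintype n] [DecidableEq n] [CommRing R]

noncomputable def parallelSum (A B : Matrix n n R) : Matrix n n R := A * (A + B)⁻¹ * B

section Algebra

variable {A B : Matrix n n R} (h : IsUnit (A + B).det)
include h

theorem parallelSum_eq_sub_left : parallelSum A B = A - A * (A + B)⁻¹ * A :=
  calc parallelSum A B = A * ((A + B)⁻¹ * (A + B)) - A * (A + B)⁻¹ * A := by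
        rw [parallelSum]; noncomm_ring
    _ = A - A * (A + B)⁻¹ * A := by rw [nonsing_inv_mul _ h, mul_one]

theorem parallelSum_eq_sub_right : parallelSum A B = B - B * (A + B)⁻¹ * B :=
  calc parallelSum A B = (A + B) * (A + B)⁻¹ * B - B * (A + B)⁻¹ * B := by
        rw [parallelSum]; noncomm_ring
    _ = B - B * (A + B)⁻¹ * B := by rw [mul_nonsing_inv _ h, one_mul]

theorem parallelSum_eq_mul_inv_mul_swap : parallelSum A B = B * (A + B)⁻¹ * A :=
  calc parallelSum A B = B * ((A + B)⁻¹ * (A + B)) - B * (A + B)⁻¹ * B := by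
        rw [parallelSum_eq_sub_right h, nonsing_inv_mul _ h, mul_one]
    _ = B * (A + B)⁻¹ * A := by noncomm_ring

theorem parallelSum_eq_add :
    parallelSum A B =
      B * (A + B)⁻¹ * A * (A + B)⁻¹ * B + A * (A + B)⁻¹ * B * (A + B)⁻¹ * A := by
  set S := (A + B)⁻¹
  calc parallelSum A B = parallelSum A B * (S * (A + B)) := by
        rw [nonsing_inv_mul _ h, mul_one]
    _ = parallelSum A B * S * A + parallelSum A B * S * B := by noncomm_ring
    _ = _ := by
        nth_rw 2 [parallelSum_eq_mul_inv_mul_swap h]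
        rw [parallelSum, add_comm]

end Algebra

section Order

variable [PartialOrder R] [StarRing R] [AddLeftMono R] {A B : Matrix n n R}

theorem posSemidef_parallelSum (hA : A.PosSemidef) (hB : B.PosSemidef)
    (h : IsUnit (A + B).det) : (parallelSum A B).PosSemidef := by
  have hS := (hA.add hB).inv
  have key := (hA.conjTranspose_mul_mul_same ((A + B)⁻¹ * B)).add
    (hB.conjTranspose_mul_mul_same ((A + B)⁻¹ * A))
  simp only [conjTranspose_mul, hS.isHermitian.eq, hA.isHermitian.eq, hB.isHermitian.eq,
    ← mul_assoc] at key
  rwa [parallelSum_eq_add h]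

theorem posSemidef_sub_parallelSum_left (hA : A.PosSemidef) (hB : B.PosSemidef)
    (h : IsUnit (A + B).det) : (A - parallelSum A B).PosSemidef := by
  rw [parallelSum_eq_sub_left h, sub_sub_cancel]
  simpa only [hA.isHermitian.eq] using (hA.add hB).inv.conjTranspose_mul_mul_same A

theorem posSemidef_sub_parallelSum_right (hA : A.PosSemidef) (hB : B.PosSemidef)
    (h : IsUnit (A + B).det) : (B - parallelSum A B).PosSemidef := by
  rw [parallelSum_eq_sub_right h, sub_sub_cancel]
  simpa only [hB.isHermitian.eq] using (hA.add hB).inv.conjTranspose_mul_mul_same B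

end Order

end Matrix

/-- The parallel sum A : B = A (A+B)⁻¹ B of Hermitian positive semidefinite
matrices is Hermitian positive semidefinite and bounded above by A and B in the
Loewner order. -/
theorem stmt2 {n : ℕ} (A B : Matrix (Fin n) (Fin n) ℂ)
    (hA : A.PosSemidef) (hB : B.PosSemidef) (hAB : (A + B).PosDef) :
    (A * (A + B)⁻¹ * B).PosSemidef ∧
    (A - A * (A + B)⁻¹ * B).PosSemidef ∧
    (B - A * (A + B)⁻¹ * B).PosSemidef := by
  have h : IsUnit (A + B).det := hAB.det_pos.ne'.isUnit
  exact ⟨posSemidef_parallelSum hA hB h, posSemidef_sub_parallelSum_left hA hB h,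
    posSemidef_sub_parallelSum_right hA hB h⟩
end

section
/- Let Ŝ = Rᴴ S̃ R with S̃ Hermitian positive definite on W̃ and R : Ŵ → W̃ injective linear, and let M⁻¹ = J S̃⁻¹ Jᴴ with J : W̃ → Ŵ linear satisfying J ∘ R = id_Ŵ. Then every eigenvalue of M⁻¹ Ŝ is real and at least 1. -/
/-!
Let `v` be an eigenvector, `w := R v` and `x := S̃⁻¹ Jᴴ Rᴴ S̃ w`. Moving the adjoints across gives
`⟪S̃ x, y⟫ = ⟪S̃ w, R J y⟫` for every `y`, so `⟪S̃ x, w⟫ = ⟪S̃ w, w⟫` (as `J R = id`) and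
`⟪S̃ x, x⟫ = μ ⟪S̃ w, w⟫` (as `J x = μ v`). The first identity says that `w` is the
`S̃`-orthogonal projection of `x` onto a line, so its energy is smaller:
`⟪S̃ w, w⟫ ≤ ⟪S̃ x, x⟫ = μ ⟪S̃ w, w⟫`, with `⟪S̃ w, w⟫ > 0` real.
-/

open scoped InnerProductSpace

namespace LinearMap

variable {𝕜 E : Type*} [RCLike 𝕜] [NormedAddCommGroup E] [InnerProductSpace 𝕜 E]

theorem IsPositive.re_inner_self_le_of_inner_eq {T : E →ₗ[𝕜] E} (hT : T.IsPositive) {u w : E}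
    (h : ⟪T u, w⟫_𝕜 = ⟪T w, w⟫_𝕜) : RCLike.re ⟪T w, w⟫_𝕜 ≤ RCLike.re ⟪T u, u⟫_𝕜 := by
  -- `0 ≤ re ⟪T (u - w), u - w⟫ = re ⟪T u, u⟫ - re ⟪T w, w⟫`: both cross terms have real part `re ⟪T w, w⟫`.
  have hsym : RCLike.re ⟪T w, u⟫_𝕜 = RCLike.re ⟪T u, w⟫_𝕜 := by
    rw [← hT.isSymmetric.conj_inner_sym u w, RCLike.conj_re]
  have hnonneg := hT.re_inner_nonneg_left (u - w)
  simp only [map_sub, inner_sub_left, inner_sub_right, hsym, h] at hnonneg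
  linarith

end LinearMap

theorem inner_apply_eq_inner_comp_of_apply_eq_adjoint {𝕜 Wt Wh : Type*} [RCLike 𝕜]
    [NormedAddCommGroup Wt] [InnerProductSpace 𝕜 Wt] [FiniteDimensional 𝕜 Wt]
    [NormedAddCommGroup Wh] [InnerProductSpace 𝕜 Wh] [FiniteDimensional 𝕜 Wh]
    {S : Wt →ₗ[𝕜] Wt} {R : Wh →ₗ[𝕜] Wt} {J : Wt →ₗ[𝕜] Wh} {x w : Wt}
    (hx : S x = J.adjoint (R.adjoint (S w))) (y : Wt) :
    ⟪S x, y⟫_𝕜 = ⟪S w, R (J y)⟫_𝕜 := by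
  rw [hx, LinearMap.adjoint_inner_left, LinearMap.adjoint_inner_left]

theorem Complex.im_eq_zero_and_one_le_re_of_mul_ofReal {μ : ℂ} {p : ℝ} (hp : 0 < p)
    (him : (μ * p).im = 0) (hle : p ≤ (μ * p).re) : μ.im = 0 ∧ 1 ≤ μ.re := by
  rw [Complex.mul_im, Complex.ofReal_im, Complex.ofReal_re, mul_zero, zero_add] at him
  rw [Complex.mul_re, Complex.ofReal_im, Complex.ofReal_re, mul_zero, sub_zero] at hle
  exact ⟨(mul_eq_zero.mp him).resolve_right hp.ne', by nlinarith⟩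

theorem stmt12_general {Wt Wh : Type*}
    [NormedAddCommGroup Wt] [InnerProductSpace ℂ Wt] [FiniteDimensional ℂ Wt]
    [NormedAddCommGroup Wh] [InnerProductSpace ℂ Wh] [FiniteDimensional ℂ Wh]
    (St Sinv : Wt →ₗ[ℂ] Wt) (R : Wh →ₗ[ℂ] Wt) (J : Wt →ₗ[ℂ] Wh)
    (hS_sym : St.IsSymmetric)
    (hS_pos : ∀ v : Wt, v ≠ 0 → 0 < (inner ℂ (St v) v : ℂ).re)
    (hSinv₂ : St ∘ₗ Sinv = LinearMap.id)
    (hR : Function.Injective R)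
    (hJR : J ∘ₗ R = LinearMap.id)
    (μ : ℂ)
    (hμ : Module.End.HasEigenvalue
      ((J ∘ₗ Sinv ∘ₗ LinearMap.adjoint J) ∘ₗ (LinearMap.adjoint R ∘ₗ St ∘ₗ R)) μ) :
    μ.im = 0 ∧ 1 ≤ μ.re := by
  obtain ⟨v, hv⟩ := hμ.exists_hasEigenvector
  set w := R v
  set x := Sinv (J.adjoint (R.adjoint (St w)))
  have hSx : St x = J.adjoint (R.adjoint (St w)) := LinearMap.congr_fun hSinv₂ _
  have hJx : J x = μ • v := by simpa using hv.apply_eq_smul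
  have hJw : J w = v := LinearMap.congr_fun hJR v
  have hSpos : St.IsPositive := ⟨hS_sym, fun y => by
    rcases eq_or_ne y 0 with rfl | hy
    · simp
    · exact (hS_pos y hy).le⟩
  have hw : 0 < (⟪St w, w⟫_ℂ).re := hS_pos w ((map_ne_zero_iff R hR).mpr hv.2)
  have hcross : ⟪St x, w⟫_ℂ = ⟪St w, w⟫_ℂ := by
    rw [inner_apply_eq_inner_comp_of_apply_eq_adjoint hSx, hJw]
  have henergy : ⟪St x, x⟫_ℂ = μ * (⟪St w, w⟫_ℂ).re := by
    rw [inner_apply_eq_inner_comp_of_apply_eq_adjoint hSx, hJx, map_smul, inner_smul_right]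
    exact congrArg (μ * ·) (hS_sym.coe_re_inner_apply_self w).symm
  have hle := hSpos.re_inner_self_le_of_inner_eq hcross
  have hreal : (⟪St x, x⟫_ℂ).im = 0 := by
    rw [← RCLike.im_to_complex, ← hS_sym.coe_re_inner_apply_self x, RCLike.ofReal_im]
  rw [henergy] at hle hreal
  exact Complex.im_eq_zero_and_one_le_re_of_mul_ofReal hw hreal hle

/-- Every eigenvalue of M⁻¹ Ŝ, with Ŝ = Rᴴ S̃ R, M⁻¹ = J S̃⁻¹ Jᴴ and J R = id,
is real and at least 1. -/
theorem stmt12 {Wt Wh : Type*}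
    [NormedAddCommGroup Wt] [InnerProductSpace ℂ Wt] [FiniteDimensional ℂ Wt]
    [NormedAddCommGroup Wh] [InnerProductSpace ℂ Wh] [FiniteDimensional ℂ Wh]
    (St Sinv : Wt →ₗ[ℂ] Wt) (R : Wh →ₗ[ℂ] Wt) (J : Wt →ₗ[ℂ] Wh)
    (hS_sym : St.IsSymmetric)
    (hS_pos : ∀ v : Wt, v ≠ 0 → 0 < (inner ℂ (St v) v : ℂ).re)
    (hSinv₁ : Sinv ∘ₗ St = LinearMap.id) (hSinv₂ : St ∘ₗ Sinv = LinearMap.id)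
    (hR : Function.Injective R)
    (hJR : J ∘ₗ R = LinearMap.id)
    (μ : ℂ)
    (hμ : Module.End.HasEigenvalue
      ((J ∘ₗ Sinv ∘ₗ LinearMap.adjoint J) ∘ₗ (LinearMap.adjoint R ∘ₗ St ∘ₗ R)) μ) :
    μ.im = 0 ∧ 1 ≤ μ.re :=
  stmt12_general St Sinv R J hS_sym hS_pos hSinv₂ hR hJR μ hμ
end
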